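/- arXiv:1508.02013 — 9 statements merged into one kernel-verified Lean document; each statement's English description precedes it below -/
import Mathlib

section
/- For every asymptotically stable function F, every dimension d ≥ 1 and number of colors k ≥ 1, there exists R ∈ ℕ such that for every coloring C of the d-element subsets of {0,1,...,R} with k colors, there exists a C-homogeneous finite set H ⊆ {0,...,R} with |H| > F(H). -/
/-- `H` is homogeneous for the colouring `C` of `d`-element finite sets:
`C` is constant on the `d`-element subsets of `H`. -/
def HomogF (k d : ℕ) (C : Finset ℕ → Fin k) (H : Finset ℕ) : Prop :=
  ∃ c : Fin k, ∀ s : Finset ℕ, s ⊆ H → s.card = d → C s = c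

/-- Homogeneity for a (possibly infinite) set `H ⊆ ℕ`. -/
def HomogS (k d : ℕ) (C : Finset ℕ → Fin k) (H : Set ℕ) : Prop :=
  ∃ c : Fin k, ∀ s : Finset ℕ, ↑s ⊆ H → s.card = d → C s = c

/-- `F` is asymptotically stable: on every increasing chain of finite sets
the value of `F` eventually stabilises. -/
def AsympStable (F : Finset ℕ → ℕ) : Prop :=
  ∀ X : ℕ → Finset ℕ, (∀ i, X i ⊆ X (i + 1)) →
    ∃ i, ∀ j, i ≤ j → F (X j) = F (X i)

/-!
By the infinite Ramsey theorem every colouring of the `d`-sets of `ℕ` has an infinite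
homogeneous set. Along the chain of its initial segments `F` is eventually constant while
the size grows, so some finite homogeneous `H` has `F H < |H|`.
If no `R` worked, pick a bad colouring `C_R` of `{0, …, R}` for each `R`. A cluster point `C`
of these in the compact space of all colourings has such a good set `H`, and `C` agrees with
infinitely many `C_R` on the subsets of `H`; for one of them `H ⊆ {0, …, R}`, a contradiction.
-/

open Filter Set

section InfiniteRamsey

variable {k d : ℕ} {C : Finset ℕ → Fin k}

lemma HomogS.homogF {H : Set ℕ} (hH : HomogS k d C H) {t : Finset ℕ} (ht : ↑t ⊆ H) :
    HomogF k d C t := by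
  obtain ⟨c, hc⟩ := hH
  exact ⟨c, fun s hs hcard => hc s ((Finset.coe_subset.2 hs).trans ht) hcard⟩

lemma HomogF.congr {C' : Finset ℕ → Fin k} {H : Finset ℕ} (hH : HomogF k d C H)
    (hCC' : ∀ s ⊆ H, C s = C' s) : HomogF k d C' H := by
  obtain ⟨c, hc⟩ := hH
  exact ⟨c, fun s hs hcard => (hCC' s hs).symm.trans (hc s hs hcard)⟩

lemma homogS_zero (C : Finset ℕ → Fin k) (H : Set ℕ) : HomogS k 0 C H :=
  ⟨C ∅, fun s _ hs => by rw [Finset.card_eq_zero.1 hs]⟩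

/-- A `(d+1)`-set is its minimum inserted into a `d`-set of larger elements. -/
lemma homogS_succ_of_insert {H : Set ℕ} {c : Fin k}
    (h : ∀ a ∈ H, ∀ s : Finset ℕ, ↑s ⊆ H ∩ Ioi a → s.card = d → C (insert a s) = c) :
    HomogS k (d + 1) C H := by
  refine ⟨c, fun s hsH hcard => ?_⟩
  have hne : s.Nonempty := Finset.card_pos.1 (by omega)
  have hmin := s.min'_mem hne
  rw [← Finset.insert_erase hmin]
  refine h _ (hsH hmin) _ (fun x hx => ⟨hsH (Finset.mem_of_mem_erase hx), ?_⟩) ?_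
  · exact lt_of_le_of_ne (s.min'_le x (Finset.mem_of_mem_erase hx)) (Finset.ne_of_mem_erase hx).symm
  · rw [Finset.card_erase_of_mem hmin, hcard, Nat.add_sub_cancel]

lemma exists_lt_infinite_homogS_insert
    (ih : ∀ (C : Finset ℕ → Fin k) {S : Set ℕ}, S.Infinite → ∃ H ⊆ S, H.Infinite ∧ HomogS k d C H)
    (C : Finset ℕ → Fin k) {T : Set ℕ} (hT : T.Infinite) :
    ∃ a ∈ T, ∃ T' ⊆ T, T'.Infinite ∧ (∀ x ∈ T', a < x) ∧
      HomogS k d (fun s => C (insert a s)) T' := by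
  obtain ⟨a, ha⟩ := hT.nonempty
  obtain ⟨T', hT'sub, hT'inf, hT'hom⟩ :=
    ih (fun s => C (insert a s)) (hT.sdiff (finite_Iic a))
  exact ⟨a, ha, T', hT'sub.trans sdiff_subset, hT'inf, fun x hx => not_le.1 (hT'sub hx).2, hT'hom⟩

theorem exists_infinite_homogS (d : ℕ) (C : Finset ℕ → Fin k) {S : Set ℕ} (hS : S.Infinite) :
    ∃ H ⊆ S, H.Infinite ∧ HomogS k d C H := by
  induction d generalizing C S with
  | zero => exact ⟨S, subset_rfl, hS, homogS_zero C S⟩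
  | succ d ih =>
    choose! pt hpt next hnext_sub hnext_inf hnext_gt hnext_hom using
      fun (T : Set ℕ) (hT : T.Infinite) => exists_lt_infinite_homogS_insert ih C hT
    have : Nonempty (Fin k) := ⟨C ∅⟩
    choose! col hcol using hnext_hom
    -- `g n` is the `n`-th shrinking of `S`; its point `pt (g n)` colours all `d`-sets of later points
    let g : ℕ → Set ℕ := fun n => next^[n] S
    have hg_succ (n : ℕ) : g (n + 1) = next (g n) := Function.iterate_succ_apply' next n S
    have hg_inf (n : ℕ) : (g n).Infinite := by
      induction n with
      | zero => exact hS
      | succ n ihn => rw [hg_succ]; exact hnext_inf _ ihn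
    have hg_anti : Antitone g :=
      antitone_nat_of_succ_le fun n => (hg_succ n).symm ▸ hnext_sub _ (hg_inf n)
    let a : ℕ → ℕ := fun n => pt (g n)
    have ha_mem (n : ℕ) : a n ∈ g n := hpt _ (hg_inf n)
    have ha_mono : StrictMono a := strictMono_nat_of_lt_succ fun n =>
      hnext_gt _ (hg_inf n) _ (hg_succ n ▸ ha_mem (n + 1))
    obtain ⟨c, hc⟩ := Finite.exists_infinite_fiber fun n => col (g n)
    refine ⟨a '' (fun n => col (g n)) ⁻¹' {c}, ?_, ?_, homogS_succ_of_insert (c := c) ?_⟩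
    · rintro _ ⟨n, -, rfl⟩
      exact hg_anti (Nat.zero_le n) (ha_mem n)
    · exact (infinite_coe_iff.1 hc).image ha_mono.injective.injOn
    · rintro _ ⟨n, hn, rfl⟩ s hs hcard
      rw [← hn]
      refine hcol _ (hg_inf n) s (fun x hx => ?_) hcard
      obtain ⟨⟨m, -, rfl⟩, hmn⟩ := hs hx
      rw [← hg_succ]
      exact hg_anti (Nat.succ_le_of_lt (ha_mono.lt_iff_lt.1 hmn)) (ha_mem m)

end InfiniteRamsey

lemma AsympStable.exists_finset_lt_card {F : Finset ℕ → ℕ} (hF : AsympStable F) {H : Set ℕ}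
    (hH : H.Infinite) : ∃ t : Finset ℕ, ↑t ⊆ H ∧ F t < t.card := by
  let X : ℕ → Finset ℕ := fun n => (Finset.range n).image (Nat.nth (· ∈ H))
  have hX_card (n : ℕ) : (X n).card = n :=
    (Finset.card_image_of_injective _ (Nat.nth_injective hH)).trans (Finset.card_range n)
  obtain ⟨i, hi⟩ := hF X fun n => Finset.image_subset_image (Finset.range_subset_range.2 n.le_succ)
  refine ⟨X (max i (F (X i) + 1)), ?_, ?_⟩
  · intro x hx
    obtain ⟨n, -, rfl⟩ := Finset.mem_image.1 hx
    exact Nat.nth_mem_of_infinite hH n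
  · rw [hi _ (le_max_left _ _), hX_card]
    exact lt_of_lt_of_le (Nat.lt_succ_self _) (le_max_right _ _)

lemma exists_homogF_lt_card {F : Finset ℕ → ℕ} (hF : AsympStable F) (d : ℕ) {k : ℕ}
    (C : Finset ℕ → Fin k) : ∃ H : Finset ℕ, HomogF k d C H ∧ F H < H.card := by
  obtain ⟨H, -, hH_inf, hH_hom⟩ := exists_infinite_homogS d C infinite_univ
  obtain ⟨t, ht, hFt⟩ := hF.exists_finset_lt_card hH_inf
  exact ⟨t, hH_hom.homogF ht, hFt⟩

-- a cluster point of the sequence in the compact space `ι → κ` (with `κ` discrete)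
lemma exists_forall_frequently_eqOn {ι κ : Type*} [Finite κ] (CC : ℕ → ι → κ) :
    ∃ C : ι → κ, ∀ t : Finset ι, ∃ᶠ R in atTop, ∀ i ∈ t, CC R i = C i := by
  let _ : TopologicalSpace κ := ⊥
  have : DiscreteTopology κ := ⟨rfl⟩
  obtain ⟨C, hC⟩ := exists_clusterPt_of_compactSpace (map CC atTop)
  refine ⟨C, fun t => ?_⟩
  have hnhds : (t : Set ι).pi (fun i => {C i}) ∈ nhds C :=
    set_pi_mem_nhds t.finite_toSet fun i _ => mem_nhds_discrete.2 rfl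
  exact (clusterPt_iff_frequently.1 hC _ hnhds).mono fun R hR i hi => hR i hi

lemma eventually_subset_range (H : Finset ℕ) : ∀ᶠ R in atTop, H ⊆ Finset.range (R + 1) :=
  (eventually_ge_atTop (H.sup id)).mono fun _ hR =>
    H.subset_range_sup_succ.trans (Finset.range_subset_range.2 (Nat.succ_le_succ hR))

theorem frt_from_as_general (F : Finset ℕ → ℕ) (hF : AsympStable F)
    (d k : ℕ) :
    ∃ R : ℕ, ∀ C : Finset ℕ → Fin k,
      ∃ H : Finset ℕ, H ⊆ Finset.range (R + 1) ∧ HomogF k d C H ∧ F H < H.card := by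
  by_contra! hbad
  choose CC hCC using hbad
  obtain ⟨C, hC⟩ := exists_forall_frequently_eqOn CC
  obtain ⟨H, hH_hom, hFH⟩ := exists_homogF_lt_card hF d C
  obtain ⟨R, hR_eq, hR_range⟩ :=
    ((hC H.powerset).and_eventually (eventually_subset_range H)).exists
  have hR_hom : HomogF k d (CC R) H :=
    hH_hom.congr fun s hs => (hR_eq s (Finset.mem_powerset.2 hs)).symm
  exact (hCC R H hR_range hR_hom).not_gt hFH

theorem frt_from_as (F : Finset ℕ → ℕ) (hF : AsympStable F)
    (d k : ℕ) (hd : 1 ≤ d) (hk : 1 ≤ k) :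
    ∃ R : ℕ, ∀ C : Finset ℕ → Fin k,
      ∃ H : Finset ℕ, H ⊆ Finset.range (R + 1) ∧ HomogF k d C H ∧ F H < H.card :=
  frt_from_as_general F hF d k
end

section
/- Suppose C is a coloring of the d-element subsets of ℕ with k colors such that every C-homogeneous set is finite. Then the function F : Finset ℕ → ℕ defined by F(X) = |X| + 1 if X is C-homogeneous and F(X) = 0 otherwise, is asymptotically stable. -/
/-!
A chain `X₀ ⊆ X₁ ⊆ ⋯` either leaves the homogeneous sets at some point, and then never returns
(homogeneity passes to subsets), so that `F` is eventually `0`; or it consists of homogeneous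
sets only. In the latter case its union is homogeneous, since any two `d`-subsets of it lie in a
common `Xᵢ`; by hypothesis the union is finite, so the chain itself is eventually constant.
-/

theorem Monotone.exists_forall_ge_eq_of_finite_range {ι α : Type*} [Preorder ι] [Nonempty ι]
    [PartialOrder α] {f : ι → α} (hf : Monotone f) (h : (Set.range f).Finite) :
    ∃ i, ∀ j, i ≤ j → f j = f i := by
  obtain ⟨i, -, hi⟩ :=
    Set.Finite.exists_maximalFor' f Set.univ (by rwa [Set.image_univ]) Set.univ_nonempty
  exact ⟨i, fun j hij => le_antisymm (hi trivial (hf hij)) (hf hij)⟩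

section Homogeneous

variable {k d : ℕ} {C : Finset ℕ → Fin k}

theorem HomogF.mono {X Y : Finset ℕ} (hY : HomogF k d C Y) (hXY : X ⊆ Y) : HomogF k d C X :=
  let ⟨c, hc⟩ := hY
  ⟨c, fun s hs => hc s (hs.trans hXY)⟩

theorem homogS_of_forall_finset_homogF {H : Set ℕ}
    (h : ∀ s : Finset ℕ, ↑s ⊆ H → HomogF k d C s) : HomogS k d C H := by
  by_cases hd : ∃ s₀ : Finset ℕ, ↑s₀ ⊆ H ∧ s₀.card = d
  · obtain ⟨s₀, hs₀H, hs₀d⟩ := hd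
    refine ⟨C s₀, fun s hsH hsd => ?_⟩
    obtain ⟨c, hc⟩ := h (s ∪ s₀) (by simpa [Finset.coe_union] using ⟨hsH, hs₀H⟩)
    rw [hc s Finset.subset_union_left hsd, hc s₀ Finset.subset_union_right hs₀d]
  · -- `h ∅` only serves to produce a colour, as `Fin k` may be empty.
    obtain ⟨c, -⟩ := h ∅ (by simp)
    exact ⟨c, fun s hsH hsd => absurd ⟨s, hsH, hsd⟩ hd⟩

theorem homogS_iUnion_of_directed {ι : Type*} [Nonempty ι] {X : ι → Finset ℕ}
    (hX : Directed (· ⊆ ·) X) (h : ∀ i, HomogF k d C (X i)) :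
    HomogS k d C (⋃ i, (X i : Set ℕ)) := by
  refine homogS_of_forall_finset_homogF fun s hs => ?_
  have hX' : Directed (· ⊆ ·) fun i => (X i : Set ℕ) :=
    hX.mono_comp _ fun _ _ => Finset.coe_subset.2
  obtain ⟨i, hi⟩ := hX'.exists_mem_subset_of_finset_subset_biUnion hs
  exact (h i).mono (Finset.coe_subset.1 hi)

end Homogeneous

theorem counterexample_is_asymp_stable (d k : ℕ) (C : Finset ℕ → Fin k)
    (hC : ∀ H : Set ℕ, HomogS k d C H → H.Finite)
    (F : Finset ℕ → ℕ)
    (hF : ∀ X : Finset ℕ,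
      (HomogF k d C X → F X = X.card + 1) ∧ (¬ HomogF k d C X → F X = 0)) :
    AsympStable F := by
  intro X hX
  have hm : Monotone X := monotone_nat_of_le_succ hX
  by_cases hhom : ∀ i, HomogF k d C (X i)
  · have hfin := hC _ (homogS_iUnion_of_directed hm.directed_le hhom)
    have hrange : (Set.range X).Finite :=
      hfin.toFinset.powerset.finite_toSet.subset <| Set.range_subset_iff.2 fun i => by
        simpa [hfin.subset_toFinset] using Set.subset_iUnion (fun i => (X i : Set ℕ)) i
    obtain ⟨i, hi⟩ := hm.exists_forall_ge_eq_of_finite_range hrange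
    exact ⟨i, fun j hij => by rw [hi j hij]⟩
  · obtain ⟨i, hi⟩ := not_forall.1 hhom
    refine ⟨i, fun j hij => ?_⟩
    rw [(hF _).2 hi, (hF _).2 fun hj => hi (hj.mono (hm hij))]
end

section
/- Let F : Finset ℕ → ℕ be asymptotically stable, and suppose D₁ ⊆ D₂ ⊆ D₃ ⊆ ... is a chain of colorings, where each D_i colors the d-element subsets of {0,...,i} with k colors, such that for every i, every D_i-homogeneous set H ⊆ {0,...,i} satisfies |H| ≤ F(H). Then the union coloring D = ⋃ D_i of all d-element subsets of ℕ has no infinite homogeneous set. -/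
/-! An infinite homogeneous set `H` for the union colouring would give the increasing chain
`Xₙ = H ∩ {0, …, n - 1}` of `Dₙ`-homogeneous sets. Along this chain `|Xₙ| ≤ F(Xₙ)`, and `F(Xₙ)` is
eventually constant, so the sizes `|Xₙ|` are bounded, which forces `H` to be finite. -/

lemma HomogS.homogF_of_subset {k d : ℕ} {C : Finset ℕ → Fin k} {H : Set ℕ}
    (hH : HomogS k d C H) {s : Finset ℕ} (hs : ↑s ⊆ H) : HomogF k d C s := by
  obtain ⟨c, hc⟩ := hH
  exact ⟨c, fun t hts htd => hc t ((Finset.coe_subset.2 hts).trans hs) htd⟩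

lemma HomogF.of_agree {k d : ℕ} {C C' : Finset ℕ → Fin k} {H : Finset ℕ}
    (hH : HomogF k d C H) (hCC' : ∀ s ⊆ H, C s = C' s) : HomogF k d C' H := by
  obtain ⟨c, hc⟩ := hH
  exact ⟨c, fun s hs hsd => (hCC' s hs).symm.trans (hc s hs hsd)⟩

lemma AsympStable.bddAbove_range {F : Finset ℕ → ℕ} (hF : AsympStable F)
    {X : ℕ → Finset ℕ} (hX : Monotone X) : BddAbove (Set.range fun n => F (X n)) := by
  obtain ⟨i, hi⟩ := hF X fun n => hX n.le_succ
  refine ((Set.finite_Iic i).image fun n => F (X n)).bddAbove.mono ?_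
  rintro _ ⟨n, rfl⟩
  rcases le_total n i with hni | hin
  · exact ⟨n, hni, rfl⟩
  · exact ⟨i, Set.mem_Iic.2 le_rfl, (hi n hin).symm⟩

lemma Set.finite_of_bddAbove_card_filter_range {H : Set ℕ} [DecidablePred (· ∈ H)]
    (h : BddAbove (Set.range fun n => ((Finset.range n).filter (· ∈ H)).card)) : H.Finite := by
  obtain ⟨B, hB⟩ := h
  by_contra hInf
  obtain ⟨T, hTH, hTcard⟩ := Set.Infinite.exists_subset_card_eq hInf (B + 1)
  obtain ⟨n, hTn⟩ := T.exists_nat_subset_range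
  have hT : T ⊆ (Finset.range n).filter (· ∈ H) := fun x hx =>
    Finset.mem_filter.2 ⟨hTn hx, hTH hx⟩
  have := (Finset.card_le_card hT).trans (hB ⟨n, rfl⟩)
  omega

theorem union_coloring_no_infinite_homogeneous_general
    (d k : ℕ) (F : Finset ℕ → ℕ) (hF : AsympStable F)
    (D : ℕ → Finset ℕ → Fin k)
    (hbound : ∀ i, ∀ H : Finset ℕ, H ⊆ Finset.range (i + 1) →
      HomogF k d (D i) H → H.card ≤ F H)
    (Dlim : Finset ℕ → Fin k)
    (hDlim : ∀ i, ∀ s : Finset ℕ, s ⊆ Finset.range (i + 1) → Dlim s = D i s) :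
    ∀ H : Set ℕ, HomogS k d Dlim H → H.Finite := by
  classical
  intro H hH
  set X : ℕ → Finset ℕ := fun n => (Finset.range n).filter (· ∈ H)
  have hXmono : Monotone X := fun m n hmn =>
    Finset.filter_subset_filter _ (Finset.range_subset_range.2 hmn)
  obtain ⟨B, hB⟩ := hF.bddAbove_range hXmono
  refine Set.finite_of_bddAbove_card_filter_range ⟨B, ?_⟩
  rintro _ ⟨n, rfl⟩
  have hXn : X n ⊆ Finset.range (n + 1) :=
    (Finset.filter_subset _ _).trans (Finset.range_subset_range.2 n.le_succ)
  have hXH : ↑(X n) ⊆ H := fun x hx => (Finset.mem_filter.1 hx).2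
  have hhom : HomogF k d (D n) (X n) :=
    (hH.homogF_of_subset hXH).of_agree fun s hs => hDlim n s (hs.trans hXn)
  exact (hbound n _ hXn hhom).trans (hB ⟨n, rfl⟩)

theorem union_coloring_no_infinite_homogeneous
    (d k : ℕ) (F : Finset ℕ → ℕ) (hF : AsympStable F)
    (D : ℕ → Finset ℕ → Fin k)
    (hchain : ∀ i, ∀ s : Finset ℕ, s ⊆ Finset.range (i + 1) → D (i + 1) s = D i s)
    (hbound : ∀ i, ∀ H : Finset ℕ, H ⊆ Finset.range (i + 1) →
      HomogF k d (D i) H → H.card ≤ F H)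
    (Dlim : Finset ℕ → Fin k)
    (hDlim : ∀ i, ∀ s : Finset ℕ, s ⊆ Finset.range (i + 1) → Dlim s = D i s) :
    ∀ H : Set ℕ, HomogS k d Dlim H → H.Finite :=
  union_coloring_no_infinite_homogeneous_general d k F hF D hbound Dlim hDlim
end

section
/- For every d ≥ 1, every r ≥ 1 and every function C : ℕ^d → ℕ^r, there exist natural numbers x₁ < x₂ < ... < x_{d+1} such that C(x₁,...,x_d) ≤ C(x₂,...,x_{d+1}) in the coordinatewise partial order on ℕ^r. -/
/-!
Colour each increasing `(d + 1)`-tuple `x` by the set of coordinates `i` at which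
`C (x₁, …, x_d) i ≤ C (x₂, …, x_{d+1}) i` holds. By the infinite Ramsey theorem there is an
increasing sequence `e` on which this colour is constant. If the colour contained every
coordinate we would be done; otherwise, for some coordinate `i`, the values of `C` at the
consecutive windows `(e n, …, e (n + d - 1))` form a strictly decreasing sequence of naturals,
which is impossible.
-/

open Set

namespace Nat

variable {κ : Type*} {k : ℕ}

def IsMonochromaticOn (f : (Fin k → ℕ) → κ) (H : Set ℕ) (c : κ) : Prop :=
  ∀ x : Fin k → ℕ, StrictMono x → (∀ i, x i ∈ H) → f x = c

theorem exists_isMonochromaticOn_of_leading_colour [Finite κ] {f : (Fin (k + 1) → ℕ) → κ}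
    {a : ℕ → ℕ} (ha : StrictMono a) (col : ℕ → κ)
    (hcol : ∀ n, IsMonochromaticOn (fun y => f (Fin.cons (a n) y)) (a '' Ioi n) (col n)) :
    ∃ H ⊆ range a, H.Infinite ∧ ∃ c, IsMonochromaticOn f H c := by
  obtain ⟨c, hc⟩ := Finite.exists_infinite_fiber col
  refine ⟨a '' (col ⁻¹' {c}), image_subset_range _ _,
    (infinite_coe_iff.mp hc).image ha.injective.injOn, c, fun x hx hxH => ?_⟩
  obtain ⟨n, hn, hxn⟩ := hxH 0
  have htail : ∀ i, Fin.tail x i ∈ a '' Ioi n := fun i => by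
    obtain ⟨m, -, hxm⟩ := hxH i.succ
    refine ⟨m, ha.lt_iff_lt.mp ?_, hxm⟩
    rw [hxm, hxn]
    exact hx i.succ_pos
  rw [← Fin.cons_self_tail x, ← hxn, ← hn]
  exact hcol n _ (hx.comp Fin.strictMono_succ) htail

/-- The infinite Ramsey theorem. -/
theorem exists_infinite_isMonochromaticOn [Finite κ] (f : (Fin k → ℕ) → κ) {S : Set ℕ}
    (hS : S.Infinite) : ∃ H ⊆ S, H.Infinite ∧ ∃ c, IsMonochromaticOn f H c := by
  induction k generalizing S with
  | zero =>
    exact ⟨S, subset_rfl, hS, f Fin.elim0, fun x _ _ => congrArg f (Subsingleton.elim _ _)⟩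
  | succ k ih =>
    have shrink : ∀ T : {T : Set ℕ // T.Infinite}, ∃ T' : {T : Set ℕ // T.Infinite}, ∃ c,
        T'.1 ⊆ T.1 ∩ Ioi (sInf T.1) ∧
          IsMonochromaticOn (fun y => f (Fin.cons (sInf T.1) y)) T'.1 c := by
      rintro ⟨T, hT⟩
      have hT' : (T ∩ Ioi (sInf T)).Infinite := by
        simpa only [sdiff_eq, compl_Iic] using hT.sdiff (finite_Iic (sInf T))
      obtain ⟨T', hT'T, hT'inf, c, hc⟩ := ih (fun y => f (Fin.cons (sInf T) y)) hT'
      exact ⟨⟨T', hT'inf⟩, c, hT'T, hc⟩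
    choose next col hnext hcol using shrink
    let T : ℕ → {T : Set ℕ // T.Infinite} := fun n => next^[n] ⟨S, hS⟩
    have hT_succ : ∀ n, T (n + 1) = next (T n) := fun n => Function.iterate_succ_apply' _ _ _
    let a : ℕ → ℕ := fun n => sInf (T n).1
    have ha_mem : ∀ n, a n ∈ (T n).1 := fun n => Nat.sInf_mem (T n).2.nonempty
    have hT_anti : Antitone fun n => (T n).1 := antitone_nat_of_succ_le fun n => by
      rw [hT_succ]
      exact (hnext _).trans inter_subset_left
    have ha_succ : ∀ n, a n < a (n + 1) := fun n => (hnext (T n) (hT_succ n ▸ ha_mem (n + 1))).2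
    obtain ⟨H, hHa, hH, c, hc⟩ := exists_isMonochromaticOn_of_leading_colour
      (strictMono_nat_of_lt_succ ha_succ) (fun n => col (T n)) fun n y hy hyT =>
        hcol (T n) y hy fun i => by
          obtain ⟨m, hnm, hym⟩ := hyT i
          rw [← hym, ← hT_succ]
          exact hT_anti (Nat.succ_le_of_lt hnm) (ha_mem m)
    refine ⟨H, hHa.trans ?_, hH, c, hc⟩
    rintro _ ⟨n, rfl⟩
    exact hT_anti (Nat.zero_le n) (ha_mem n)

theorem exists_strictMono_monochromatic [Finite κ] (f : (Fin k → ℕ) → κ) :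
    ∃ e : ℕ → ℕ, StrictMono e ∧ ∃ c, ∀ x : Fin k → ℕ, StrictMono x → f (e ∘ x) = c := by
  obtain ⟨H, -, hH, c, hc⟩ := exists_infinite_isMonochromaticOn f infinite_univ
  exact ⟨nth (· ∈ H), nth_strictMono hH, c, fun x hx =>
    hc _ ((nth_strictMono hH).comp hx) fun i => nth_mem_of_infinite hH (x i)⟩

end Nat

theorem adjacent_ramsey_general (d r : ℕ)
    (C : (Fin d → ℕ) → (Fin r → ℕ)) :
    ∃ x : Fin (d + 1) → ℕ, StrictMono x ∧
      C (fun i => x i.castSucc) ≤ C (fun i => x i.succ) := by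
  obtain ⟨e, he, c, hc⟩ := Nat.exists_strictMono_monochromatic
    fun (x : Fin (d + 1) → ℕ) (i : Fin r) => C (fun j => x j.castSucc) i ≤ C (fun j => x j.succ) i
  let window (n : ℕ) : Fin (d + 1) → ℕ := fun j => n + j
  have hwindow : ∀ n, StrictMono (window n) := fun n _ _ h => Nat.add_lt_add_left h n
  by_cases hall : ∀ i, c i
  · refine ⟨e ∘ window 0, he.comp (hwindow 0), fun i => ?_⟩
    simpa only [← hc _ (hwindow 0)] using hall i
  · obtain ⟨i, hi⟩ := not_forall.mp hall
    let v (n : ℕ) : ℕ := C (fun j : Fin d => e (n + j)) i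
    have hv : ∀ n, v (n + 1) < v n := fun n => not_le.mp <| by
      rw [← hc _ (hwindow n)] at hi
      simpa only [v, window, Function.comp_def, Fin.val_castSucc, Fin.val_succ, add_assoc,
        add_comm 1] using hi
    obtain ⟨n, hn⟩ := WellFounded.not_rel_apply_succ (r := (· < ·)) v
    exact absurd (hv n) hn

theorem adjacent_ramsey (d r : ℕ) (hd : 1 ≤ d) (hr : 1 ≤ r)
    (C : (Fin d → ℕ) → (Fin r → ℕ)) :
    ∃ x : Fin (d + 1) → ℕ, StrictMono x ∧
      C (fun i => x i.castSucc) ≤ C (fun i => x i.succ) :=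
  adjacent_ramsey_general d r C
end

section
/- The finitary Ramsey theorem restricted to min-dependent functions is equivalent to the parametrized Paris–Harrington principle: for fixed d and k, the statement 'for every F : Finset ℕ → ℕ satisfying min X = min Y → F(X) = F(Y), there exists R such that every k-coloring of d-element subsets of {0,...,R} has a homogeneous H with |H| > F(H)' holds if and only if 'for every f : ℕ → ℕ and every a there exists R such that every k-coloring of d-element subsets of {a,...,R} has a homogeneous H with |H| ≥ f(min H)'. -/
/-- `F` is min-dependent: its value depends only on the minimum of the set. -/
def MinDep (F : Finset ℕ → ℕ) : Prop :=
  ∀ X Y : Finset ℕ, X.min = Y.min → F X = F Y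

theorem HomogF.image_of_injective {k d : ℕ} {C : Finset ℕ → Fin k} {H : Finset ℕ}
    {g : ℕ → ℕ} (hg : Function.Injective g) (hH : HomogF k d (fun s => C (s.image g)) H) :
    HomogF k d C (H.image g) := by
  obtain ⟨c, hc⟩ := hH
  refine ⟨c, fun s hs hcard => ?_⟩
  obtain ⟨t, ht, rfl⟩ := Finset.subset_image_iff.mp hs
  exact hc t ht (by rwa [Finset.card_image_of_injective _ hg] at hcard)

theorem MinDep.apply_eq_apply_singleton_min' {F : Finset ℕ → ℕ} (hF : MinDep F)
    {H : Finset ℕ} (hH : H.Nonempty) : F H = F {H.min' hH} :=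
  hF _ _ (by rw [Finset.min_singleton, Finset.coe_min'])

/-- `X ↦ g (min X)`, with value `0` at `∅`. -/
def ofMin (g : ℕ → ℕ) (X : Finset ℕ) : ℕ :=
  WithTop.recTopCoe 0 g X.min

theorem minDep_ofMin (g : ℕ → ℕ) : MinDep (ofMin g) := by
  intro X Y h
  simp only [ofMin, h]

theorem ofMin_of_nonempty (g : ℕ → ℕ) {X : Finset ℕ} (hX : X.Nonempty) :
    ofMin g X = g (X.min' hX) := by
  rw [ofMin, ← Finset.coe_min' hX]
  rfl

theorem ph_of_frt_minDep {d k : ℕ}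
    (frt : ∀ F : Finset ℕ → ℕ, MinDep F →
      ∃ R : ℕ, ∀ C : Finset ℕ → Fin k,
        ∃ H : Finset ℕ, H ⊆ Finset.range (R + 1) ∧ HomogF k d C H ∧ F H < H.card)
    (f : ℕ → ℕ) (a : ℕ) :
    ∃ R : ℕ, ∀ C : Finset ℕ → Fin k,
      ∃ H : Finset ℕ, ↑H ⊆ Finset.Icc a R ∧ HomogF k d C H ∧
        ∃ hH : H.Nonempty, f (H.min' hH) ≤ H.card := by
  obtain ⟨R, hR⟩ := frt (ofMin fun m => f (m + a)) (minDep_ofMin _)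
  refine ⟨R + a, fun C => ?_⟩
  obtain ⟨H, hHR, hHom, hlt⟩ := hR fun s => C (s.image (· + a))
  have hne : H.Nonempty := Finset.card_pos.mp (by omega)
  have hinj : Function.Injective (· + a) := add_left_injective a
  refine ⟨H.image (· + a), ?_, hHom.image_of_injective hinj, hne.image _, ?_⟩
  · intro x hx
    obtain ⟨h, hh, rfl⟩ := Finset.mem_image.mp hx
    have := Finset.mem_range.mp (hHR hh)
    simp only [Finset.mem_Icc]
    omega
  · rw [Finset.min'_image fun _ _ h => Nat.add_le_add_right h a, Finset.card_image_of_injective _ hinj]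
    rw [ofMin_of_nonempty _ hne] at hlt
    exact hlt.le

theorem frt_minDep_of_ph {d k : ℕ}
    (ph : ∀ f : ℕ → ℕ, ∀ a : ℕ,
      ∃ R : ℕ, ∀ C : Finset ℕ → Fin k,
        ∃ H : Finset ℕ, ↑H ⊆ Finset.Icc a R ∧ HomogF k d C H ∧
          ∃ hH : H.Nonempty, f (H.min' hH) ≤ H.card)
    (F : Finset ℕ → ℕ) (hF : MinDep F) :
    ∃ R : ℕ, ∀ C : Finset ℕ → Fin k,
      ∃ H : Finset ℕ, H ⊆ Finset.range (R + 1) ∧ HomogF k d C H ∧ F H < H.card := by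
  obtain ⟨R, hR⟩ := ph (fun n => F {n} + 1) 0
  refine ⟨R, fun C => ?_⟩
  obtain ⟨H, hHR, hHom, hne, hcard⟩ := hR C
  refine ⟨H, fun x hx => ?_, hHom, ?_⟩
  · have := hHR hx
    simp only [Finset.mem_Icc] at this
    exact Finset.mem_range.mpr (by omega)
  · rw [hF.apply_eq_apply_singleton_min' hne]
    exact hcard

theorem frt_md_iff_ph_general (d k : ℕ) :
    (∀ F : Finset ℕ → ℕ, MinDep F →
      ∃ R : ℕ, ∀ C : Finset ℕ → Fin k,
        ∃ H : Finset ℕ, H ⊆ Finset.range (R + 1) ∧ HomogF k d C H ∧ F H < H.card) ↔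
    (∀ f : ℕ → ℕ, ∀ a : ℕ,
      ∃ R : ℕ, ∀ C : Finset ℕ → Fin k,
        ∃ H : Finset ℕ, ↑H ⊆ Finset.Icc a R ∧ HomogF k d C H ∧
          ∃ hH : H.Nonempty, f (H.min' hH) ≤ H.card) :=
  ⟨ph_of_frt_minDep, frt_minDep_of_ph⟩

theorem frt_md_iff_ph (d k : ℕ) (hd : 1 ≤ d) (hk : 1 ≤ k) :
    (∀ F : Finset ℕ → ℕ, MinDep F →
      ∃ R : ℕ, ∀ C : Finset ℕ → Fin k,
        ∃ H : Finset ℕ, H ⊆ Finset.range (R + 1) ∧ HomogF k d C H ∧ F H < H.card) ↔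
    (∀ f : ℕ → ℕ, ∀ a : ℕ,
      ∃ R : ℕ, ∀ C : Finset ℕ → Fin k,
        ∃ H : Finset ℕ, ↑H ⊆ Finset.Icc a R ∧ HomogF k d C H ∧
          ∃ hH : H.Nonempty, f (H.min' hH) ≤ H.card) :=
  frt_md_iff_ph_general d k
end

section
/- Let α and β be ordinals below ε₀ with Cantor normal forms α = ω^{α₁}·a₁ + ... + ω^{αₙ}·aₙ and β = ω^{β₁}·b₁ + ... + ω^{βₘ}·bₘ (with a_i, b_i positive and exponents strictly decreasing). If CP(α,β) ≤ CP(β,γ), CE(α,β) ≤ CE(β,γ) and CC(α,β) ≤ CC(β,γ) for some ordinal γ < ε₀, then α ≤ β. -/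
open ONote

/-- The list of terms `(exponent, coefficient)` of the Cantor normal form. -/
def terms : ONote → List (ONote × ℕ+)
  | ONote.zero => []
  | ONote.oadd e n a => (e, n) :: terms a

open Classical in
/-- Comparison position: the least (1-based) index at which the Cantor normal
forms of `α` and `β` differ (missing terms are treated as `0`, so they differ
from any actual term); `0` if the normal forms coincide. -/
noncomputable def CP (α β : ONote) : ℕ :=
  if h : ∃ i, (terms α)[i]? ≠ (terms β)[i]? then Nat.find h + 1 else 0

/-- Comparison coefficient: the coefficient of `α` at position `CP α β`,
with the convention that it is `0` when `CP α β = 0` or when `α` has no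
term at that position. -/
noncomputable def CC (α β : ONote) : ℕ :=
  match CP α β with
  | 0 => 0
  | i + 1 => (((terms α)[i]?).map (fun p => ((p.2 : ℕ+) : ℕ))).getD 0

/-- Comparison exponent: the exponent of `α` at position `CP α β`,
with the convention that it is `0` when `CP α β = 0` or when `α` has no
term at that position. -/
noncomputable def CE (α β : ONote) : ONote :=
  match CP α β with
  | 0 => ONote.zero
  | i + 1 => (((terms α)[i]?).map (fun p => p.1)).getD ONote.zero

/-- Maximal position: `MP 0 = 1`, and for `α = ω^α₁·a₁ + ⋯ + ω^αₙ·aₙ`,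
`MP α = max {n, MP α₁, …, MP αₙ}`. -/
def MP : ONote → ℕ
  | ONote.zero => 1
  | ONote.oadd e _ a => max (MP e) (max ((terms a).length + 1) (MP a))

/-- Maximal coefficient: `MC 0 = 0`, and for `α = ω^α₁·a₁ + ⋯ + ω^αₙ·aₙ`,
`MC α = max {aᵢ, MC αᵢ}`. -/
def MC : ONote → ℕ
  | ONote.zero => 0
  | ONote.oadd e n a => max (MC e) (max ((n : ℕ+) : ℕ) (MC a))

/-! On normal forms, `<` is the lexicographic order on the lists of terms, a term being compared
first by exponent and then by coefficient. Let `i + 1 = CP α β ≤ CP β γ = j + 1`. If `α` has no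
term at position `i`, it is a proper prefix of `β`. Otherwise `CC α β > 0` forces `β` to have a
term at position `j`, hence at `i`. If `i < j`, the exponents of `β` strictly decrease, so the
exponent of `α` at `i` is at most `CE β γ`, which is below the exponent of `β` at `i`. If `i = j`,
the term of `α` at `i` has exponent and coefficient at most those of `β` there and differs from
it. -/

theorem List.Lex.of_getElem? {α : Type*} {r : α → α → Prop} :
    ∀ {l₁ l₂ : List α} (i : ℕ), (∀ k < i, l₁[k]? = l₂[k]?) →
      Option.lt r l₁[i]? l₂[i]? → List.Lex r l₁ l₂
  | [], [], _, _, h => by simp [Option.lt] at h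
  | [], _ :: _, _, _, _ => .nil
  | _ :: _, [], i, _, h => by simp [Option.lt] at h
  | _ :: _, _ :: _, 0, _, h => .rel h
  | a :: l₁, b :: l₂, i + 1, hagree, h => by
      obtain rfl : a = b := by simpa using hagree 0 i.succ_pos
      exact .cons (of_getElem? i (fun k hk => by simpa using hagree (k + 1) (by omega)) h)

theorem terms_injective : Function.Injective terms
  | ONote.zero, ONote.zero, _ => rfl
  | ONote.zero, ONote.oadd _ _ _, h | ONote.oadd _ _ _, ONote.zero, h => by simp [terms] at h
  | ONote.oadd _ _ _, ONote.oadd _ _ _, h => by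
      simp only [terms, List.cons.injEq, Prod.mk.injEq] at h
      obtain ⟨⟨rfl, rfl⟩, h⟩ := h
      rw [terms_injective h]

theorem lt_of_lex_terms :
    ∀ {α β : ONote}, α.NF → β.NF →
      List.Lex (Prod.Lex (· < ·) (· < ·)) (terms α) (terms β) → α < β
  | ONote.zero, ONote.zero, _, _, h => nomatch h
  | ONote.zero, ONote.oadd e n a, _, _, _ => oadd_pos e n a
  | ONote.oadd _ _ _, ONote.zero, _, _, h => nomatch h
  | ONote.oadd _ _ _, ONote.oadd _ _ _, hα, hβ, h => by
      cases h with
      | rel h =>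
        rcases Prod.lex_def.1 h with h | ⟨rfl, h⟩
        · exact oadd_lt_oadd_1 hα h
        · exact oadd_lt_oadd_2 hα h
      | cons h => exact oadd_lt_oadd_3 (lt_of_lex_terms hα.snd hβ.snd h)

namespace ONote

theorem NFBelow.repr_lt_of_mem_terms {a : ONote} {b : Ordinal} (h : a.NFBelow b) :
    ∀ p ∈ terms a, p.1.repr < b := by
  induction h with
  | zero => simp [terms]
  | oadd' _ _ hlt _ ih =>
    simp only [terms, List.mem_cons, forall_eq_or_imp]
    exact ⟨hlt, fun p hp => (ih p hp).trans hlt⟩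

theorem NF.nf_of_mem_terms : ∀ {a : ONote}, a.NF → ∀ p ∈ terms a, p.1.NF
  | ONote.zero, _ => by simp [terms]
  | ONote.oadd _ _ _, h => by
      simp only [terms, List.mem_cons, forall_eq_or_imp]
      exact ⟨h.fst, h.snd.nf_of_mem_terms⟩

theorem NF.pairwise_terms : ∀ {a : ONote}, a.NF → (terms a).Pairwise (fun p q => q.1 < p.1)
  | ONote.zero, _ => by simp [terms]
  | ONote.oadd _ _ _, h => List.pairwise_cons.2
      ⟨fun q hq => lt_def.2 (h.snd'.repr_lt_of_mem_terms q hq), h.snd.pairwise_terms⟩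

theorem prodLex_of_le_of_ne {M : Type*} [PartialOrder M] {p q : ONote × M}
    (hp : p.1.NF) (hq : q.1.NF) (h₁ : p.1 ≤ q.1) (h₂ : p.2 ≤ q.2) (hne : p ≠ q) :
    Prod.Lex (· < ·) (· < ·) p q := by
  by_cases hlt : p.1 < q.1
  · exact .left _ _ hlt
  have heq : p.1 = q.1 := repr_inj.1 (le_antisymm (le_def.1 h₁) (not_lt.1 (mt lt_def.2 hlt)))
  obtain ⟨p₁, p₂⟩ := p
  obtain ⟨q₁, q₂⟩ := q
  obtain rfl : p₁ = q₁ := heq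
  exact .right _ (h₂.lt_of_ne fun h => hne (congrArg _ h))

end ONote

theorem terms_eq_of_CP_eq_zero {α β : ONote} (h : CP α β = 0) : terms α = terms β := by
  unfold CP at h
  split_ifs at h with hdiff
  push Not at hdiff
  exact List.ext_getElem? hdiff

theorem getElem?_terms_of_CP_eq_succ {α β : ONote} {i : ℕ} (h : CP α β = i + 1) :
    (∀ k < i, (terms α)[k]? = (terms β)[k]?) ∧ (terms α)[i]? ≠ (terms β)[i]? := by
  classical
  unfold CP at h
  split_ifs at h with hdiff
  obtain rfl : Nat.find hdiff = i := by omega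
  exact ⟨fun k hk => not_not.1 (Nat.find_min hdiff hk), Nat.find_spec hdiff⟩

theorem CC_CE_of_CP_eq_succ {α β : ONote} {i : ℕ} {p : ONote × ℕ+} (h : CP α β = i + 1)
    (hp : (terms α)[i]? = some p) : CC α β = p.2 ∧ CE α β = p.1 := by
  simp [CC, CE, h, hp]

theorem CC_eq_zero_of_CP_eq_succ {α β : ONote} {i : ℕ} (h : CP α β = i + 1)
    (hi : (terms α)[i]? = none) : CC α β = 0 := by
  simp [CC, h, hi]

theorem cp_cc_ce_le_imp_le_general (α β γ : ONote) (hα : α.NF) (hβ : β.NF)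
    (h1 : CP α β ≤ CP β γ) (h2 : CE α β ≤ CE β γ) (h3 : CC α β ≤ CC β γ) :
    α ≤ β := by
  rcases hCP : CP α β with _ | i
  · exact (terms_injective (terms_eq_of_CP_eq_zero hCP)).le
  obtain ⟨j, hCP', hij⟩ : ∃ j, CP β γ = j + 1 ∧ i ≤ j := ⟨CP β γ - 1, by omega, by omega⟩
  obtain ⟨hagree, hdiff⟩ := getElem?_terms_of_CP_eq_succ hCP
  refine (lt_of_lex_terms hα hβ (.of_getElem? i hagree ?_)).le
  rcases hαi : (terms α)[i]? with _ | p
  · obtain ⟨q, hq⟩ := Option.ne_none_iff_exists'.1 (hαi ▸ hdiff).symm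
    simp [hq, Option.lt]
  obtain ⟨hCC, hCE⟩ := CC_CE_of_CP_eq_succ hCP hαi
  rcases hβj : (terms β)[j]? with _ | q
  · have := CC_eq_zero_of_CP_eq_succ hCP' hβj
    have := p.2.pos
    omega
  obtain ⟨hCC', hCE'⟩ := CC_CE_of_CP_eq_succ hCP' hβj
  rw [hCE, hCE'] at h2
  rw [hCC, hCC'] at h3
  obtain ⟨hj, hjq⟩ := List.getElem?_eq_some_iff.1 hβj
  rw [List.getElem?_eq_getElem (hij.trans_lt hj)] at hdiff ⊢
  rcases hij.lt_or_eq with hij | rfl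
  · have hexp := List.pairwise_iff_getElem.1 hβ.pairwise_terms i j (hij.trans hj) hj hij
    exact .left _ _ (lt_of_le_of_lt h2 (hjq ▸ hexp))
  · rw [hjq] at hdiff ⊢
    exact prodLex_of_le_of_ne (hα.nf_of_mem_terms p (List.mem_of_getElem? hαi))
      (hβ.nf_of_mem_terms q (List.mem_of_getElem? hβj)) h2 (PNat.coe_le_coe _ _ |>.1 h3)
      (fun h => hdiff (hαi.trans (congrArg some h)))

theorem cp_cc_ce_le_imp_le (α β γ : ONote) (hα : α.NF) (hβ : β.NF) (hγ : γ.NF)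
    (h1 : CP α β ≤ CP β γ) (h2 : CE α β ≤ CE β γ) (h3 : CC α β ≤ CC β γ) :
    α ≤ β :=
  cp_cc_ce_le_imp_le_general α β γ hα hβ h1 h2 h3
end

section
/- Let F_d^l be defined by recursion on d: F₁^l(ω^l·n_l + ... + ω⁰·n₀) = (n_l,...,n₀), and F_{d+1}^l(α₁,...,α_{d+1}) = (CP(α₁,α₂), CC(α₁,α₂), F_d^l(CE(α₁,α₂),...,CE(α_d,α_{d+1}))). Then for all ordinals α₁,...,α_{d+1} below ω_d(l+1): if F_d^l(α₁,...,α_d) ≤ F_d^l(α₂,...,α_{d+1}) coordinatewise, then α₁ ≤ α₂. -/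
open ONote

/-- The coefficient of `ω^i` in the Cantor normal form of `α`. -/
def coeff (α : ONote) (i : ℕ) : ℕ :=
  (((terms α).find? (fun p => p.1 = ONote.ofNat i)).map
    (fun p => ((p.2 : ℕ+) : ℕ))).getD 0

/-- `Fdl l d` is the function `F_{d+1}^l` of the paper: it takes `d + 1`
ordinals (dimension `d + 1`) and returns a tuple of natural numbers.
`F₁^l (ω^l·n_l + ⋯ + ω^0·n₀) = (n_l, …, n₀)` and
`F_{d+1}^l (α₁, …, α_{d+1}) =
  (CP(α₁,α₂), CC(α₁,α₂), F_d^l (CE(α₁,α₂), …, CE(α_d,α_{d+1})))`. -/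
noncomputable def Fdl (l : ℕ) : (d : ℕ) → (Fin (d + 1) → ONote) → List ℕ
  | 0, α => ((List.range (l + 1)).reverse).map (coeff (α 0))
  | d + 1, α =>
      CP (α 0) (α 1) :: CC (α 0) (α 1) ::
        Fdl l d (fun i => CE (α i.castSucc) (α i.succ))

/-- The tower `ω_0(l) = l`, `ω_{n+1}(l) = ω^{ω_n(l)}` as an ordinal notation. -/
def omegaStack : ℕ → ℕ → ONote
  | 0, l => ONote.ofNat l
  | n + 1, l => ONote.oadd (omegaStack n l) 1 ONote.zero

/-!
Induction on `d`. For `d = 0` the bound `α i < ω ^ (l + 1)` makes every `α i` equal to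
`∑_{k ≤ l} ω ^ k · coeff (α i) k` (summed downwards), which is monotone in the coefficients.

For the step, suppose `α 1 < α 0` and let `i` be the first position at which their normal forms
differ, where `α 0` carries the term `ω ^ e · n`. Then `CP (α 1) (α 2) ≥ i + 1` and
`CC (α 1) (α 2) ≥ n > 0` force a term `ω ^ e' · m` of `α 1` at a position `j ≥ i` with `m ≥ n`.
Since exponents strictly decrease along a normal form and the term of `α 1` at position `i` is
lexicographically below `(e, n)`, we get `e' < e`, i.e. `CE (α 1) (α 2) < CE (α 0) (α 1)`,
contradicting the induction hypothesis for the exponent sequence `CE (α i) (α (i + 1))`.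
-/

namespace ONote

open scoped Ordinal

theorem nf_of_mem_terms {α : ONote} (h : α.NF) {p : ONote × ℕ+} (hp : p ∈ terms α) : p.1.NF := by
  induction α with
  | zero => simp [terms] at hp
  | oadd e n a _ iha =>
    rcases List.mem_cons.1 hp with rfl | hp
    · exact h.fst
    · exact iha h.snd hp

theorem repr_lt_of_mem_terms {α : ONote} {b : Ordinal} (h : α.NFBelow b) {p : ONote × ℕ+}
    (hp : p ∈ terms α) : repr p.1 < b := by
  induction α generalizing b with
  | zero => simp [terms] at hp
  | oadd e n a _ iha =>
    rcases List.mem_cons.1 hp with rfl | hp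
    · exact h.lt
    · exact (iha h.snd hp).trans h.lt

theorem terms_pairwise {α : ONote} (h : α.NF) : (terms α).Pairwise (fun p q => q.1 < p.1) := by
  induction α with
  | zero => simp [terms]
  | oadd e n a _ iha =>
    exact List.pairwise_cons.2
      ⟨fun q hq => lt_def.2 (repr_lt_of_mem_terms h.snd' hq), iha h.snd⟩

theorem lt_of_terms_getElem? {α : ONote} (h : α.NF) {i j : ℕ} {p q : ONote × ℕ+} (hij : i < j)
    (hp : (terms α)[i]? = some p) (hq : (terms α)[j]? = some q) : q.1 < p.1 := by
  obtain ⟨hi, rfl⟩ := List.getElem?_eq_some_iff.1 hp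
  obtain ⟨hj, rfl⟩ := List.getElem?_eq_some_iff.1 hq
  exact List.pairwise_iff_getElem.1 (terms_pairwise h) i j hi hj hij

theorem exists_firstDiff_terms_of_lt {α β : ONote} (hα : α.NF) (hβ : β.NF) (h : β < α) :
    ∃ (i : ℕ) (e : ONote) (n : ℕ+), (∀ j < i, (terms α)[j]? = (terms β)[j]?) ∧
      (terms α)[i]? = some (e, n) ∧
      ∀ e' n', (terms β)[i]? = some (e', n') → e' < e ∨ e' = e ∧ (n' : ℕ) < n := by
  induction α generalizing β with
  | zero => exact absurd (lt_def.1 h) (by simp)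
  | oadd e n a _ iha =>
    cases β with
    | zero => exact ⟨0, e, n, by simp, rfl, by simp [terms]⟩
    | oadd e' n' a' =>
      have := hα.fst
      have := hβ.fst
      obtain he | he | he := lt_trichotomy (repr e') (repr e)
      · exact ⟨0, e, n, by simp, rfl, by simp [terms, lt_def.2 he]⟩
      · obtain rfl := repr_inj.1 he
        obtain hn | hn | hn := lt_trichotomy (n' : ℕ) n
        · exact ⟨0, e', n, by simp, rfl, by simpa [terms] using hn⟩
        · obtain rfl := PNat.coe_injective hn
          have ha : a' < a := lt_def.2 (by simpa [lt_def] using h)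
          obtain ⟨i, e'', n'', hpre, hi, hlex⟩ := iha hα.snd hβ.snd ha
          refine ⟨i + 1, e'', n'', fun j hj => ?_, hi, hlex⟩
          cases j with
          | zero => rfl
          | succ j => exact hpre j (by omega)
        · exact absurd h (oadd_lt_oadd_2 hα hn).asymm
      · exact absurd h (oadd_lt_oadd_1 hα (lt_def.2 he)).asymm

theorem CP_eq_of_firstDiff {α β : ONote} {i : ℕ} (hpre : ∀ j < i, (terms α)[j]? = (terms β)[j]?)
    (hi : (terms α)[i]? ≠ (terms β)[i]?) : CP α β = i + 1 := by
  classical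
  rw [CP, dif_pos ⟨i, hi⟩, Nat.add_right_cancel_iff, Nat.find_eq_iff]
  exact ⟨hi, fun j hj => not_not_intro (hpre j hj)⟩

theorem CC_eq_of_CP_eq {α β : ONote} {i : ℕ} {e : ONote} {n : ℕ+} (h : CP α β = i + 1)
    (hi : (terms α)[i]? = some (e, n)) : CC α β = n := by
  simp [CC, h, hi]

theorem CE_eq_of_CP_eq {α β : ONote} {i : ℕ} {e : ONote} {n : ℕ+} (h : CP α β = i + 1)
    (hi : (terms α)[i]? = some (e, n)) : CE α β = e := by
  simp [CE, h, hi]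

theorem exists_terms_of_CC_pos {α β : ONote} (h : 0 < CC α β) :
    ∃ (j : ℕ) (e : ONote) (n : ℕ+), CP α β = j + 1 ∧ (terms α)[j]? = some (e, n) := by
  rcases hCP : CP α β with _ | j
  · simp [CC, hCP] at h
  · rcases hj : (terms α)[j]? with _ | ⟨e, n⟩
    · simp [CC, hCP, hj] at h
    · exact ⟨j, e, n, rfl, hj⟩

theorem CE_eq_zero_or_mem_terms (α β : ONote) : CE α β = 0 ∨ ∃ n, (CE α β, n) ∈ terms α := by
  rcases hCP : CP α β with _ | j
  · simp [CE, hCP]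
  · rcases hj : (terms α)[j]? with _ | ⟨e, n⟩
    · simp [CE, hCP, hj]
    · exact .inr ⟨n, by rw [CE_eq_of_CP_eq hCP hj]; exact List.mem_of_getElem? hj⟩

theorem nf_CE {α : ONote} (h : α.NF) (β : ONote) : (CE α β).NF := by
  rcases CE_eq_zero_or_mem_terms α β with h0 | ⟨n, hn⟩
  · rw [h0]; infer_instance
  · exact nf_of_mem_terms h hn

theorem CE_lt_of_lt_oadd {α s : ONote} (h : α.NF) (hs : 0 < s) (hα : α < oadd s 1 0)
    (β : ONote) : CE α β < s := by
  have hb : α.NFBelow (repr s) := h.below_of_lt' (by simpa [lt_def] using hα)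
  rcases CE_eq_zero_or_mem_terms α β with h0 | ⟨n, hn⟩
  · rwa [h0]
  · exact lt_def.2 (repr_lt_of_mem_terms hb hn)

theorem CE_lt_CE_of_lt {α₀ α₁ α₂ : ONote} (h₀ : α₀.NF) (h₁ : α₁.NF) (h : α₁ < α₀)
    (hCP : CP α₀ α₁ ≤ CP α₁ α₂) (hCC : CC α₀ α₁ ≤ CC α₁ α₂) : CE α₁ α₂ < CE α₀ α₁ := by
  obtain ⟨i, e, n, hpre, hi, hlex⟩ := exists_firstDiff_terms_of_lt h₀ h₁ h
  have hCP₀ : CP α₀ α₁ = i + 1 :=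
    CP_eq_of_firstDiff hpre fun h' => by simpa using hlex e n (h' ▸ hi)
  rw [CC_eq_of_CP_eq hCP₀ hi] at hCC
  rw [CE_eq_of_CP_eq hCP₀ hi]
  obtain ⟨j, e', m, hCP₁, hj⟩ := exists_terms_of_CC_pos (n.pos.trans_le hCC)
  rw [CC_eq_of_CP_eq hCP₁ hj] at hCC
  rw [CE_eq_of_CP_eq hCP₁ hj]
  have hij : i ≤ j := by omega
  obtain ⟨⟨e₂, n₂⟩, hi₁⟩ : ∃ p, (terms α₁)[i]? = some p :=
    Option.isSome_iff_exists.1 (by simp [(List.getElem?_eq_some_iff.1 hj).1.trans_le' hij])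
  rcases hij.eq_or_lt with rfl | hij
  · obtain ⟨rfl, rfl⟩ : e₂ = e' ∧ n₂ = m := by simpa [hi₁] using hj
    exact (hlex _ _ hi₁).resolve_right fun h => (h.2.trans_le hCC).false
  · exact (lt_of_terms_getElem? h₁ hij hi₁ hj).trans_le
      ((hlex _ _ hi₁).elim le_of_lt fun h => h.1.le)

theorem coeff_oadd (e : ONote) (n : ℕ+) (a : ONote) (k : ℕ) :
    coeff (oadd e n a) k = if e = ofNat k then (n : ℕ) else coeff a k := by
  by_cases he : e = ofNat k <;> simp [coeff, terms, he]

theorem coeff_eq_zero_of_NFBelow {α : ONote} {k : ℕ} (h : α.NFBelow k) : coeff α k = 0 := by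
  induction α with
  | zero => rfl
  | oadd e n a _ iha =>
    have he : e ≠ ofNat k := fun he => by simpa [he] using h.lt
    rw [coeff_oadd, if_neg he, iha (h.snd.mono h.lt.le)]

noncomputable def coeffSum (α : ONote) : ℕ → Ordinal
  | 0 => 0
  | m + 1 => ω ^ (m : Ordinal) * coeff α m + coeffSum α m

theorem coeffSum_mono {α β : ONote} {m : ℕ} (h : ∀ k < m, coeff α k ≤ coeff β k) :
    coeffSum α m ≤ coeffSum β m := by
  induction m with
  | zero => rfl
  | succ m ih =>
    exact add_le_add (mul_le_mul_right (Nat.cast_le.2 (h m m.lt_succ_self)) _)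
      (ih fun k hk => h k (hk.trans m.lt_succ_self))

theorem coeffSum_congr {α β : ONote} {m : ℕ} (h : ∀ k < m, coeff α k = coeff β k) :
    coeffSum α m = coeffSum β m :=
  (coeffSum_mono fun k hk => (h k hk).le).antisymm (coeffSum_mono fun k hk => (h k hk).ge)

theorem repr_eq_coeffSum {α : ONote} {m : ℕ} (h : α.NFBelow m) : repr α = coeffSum α m := by
  induction m generalizing α with
  | zero => simp [NFBelow_zero.1 h, coeffSum]
  | succ m ih =>
    cases α with
    | zero => simp [coeffSum, coeff, terms, ← ih NFBelow.zero]
    | oadd e n a =>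
      obtain hlt | heq := (Order.lt_succ_iff.1 (by simpa using h.lt) : repr e ≤ m).lt_or_eq
      · have hα : (oadd e n a).NFBelow m := .oadd h.fst h.snd hlt
        rw [coeffSum, coeff_eq_zero_of_NFBelow hα, ← ih hα]
        simp
      · have := h.fst
        obtain rfl : e = ofNat m := repr_inj.1 (by simpa using heq)
        have hcoeff : ∀ k < m, coeff (oadd (ofNat m) n a) k = coeff a k := fun k hk => by
          rw [coeff_oadd, if_neg fun he => hk.ne' (by simpa using congrArg repr he)]
        rw [coeffSum, coeffSum_congr hcoeff, ← ih (by simpa using h.snd), coeff_oadd, if_pos rfl]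
        simp [repr]

theorem le_of_forall_coeff_le {α β : ONote} {m : ℕ} (hα : α.NFBelow m) (hβ : β.NFBelow m)
    (h : ∀ k < m, coeff α k ≤ coeff β k) : α ≤ β := by
  rw [le_def, repr_eq_coeffSum hα, repr_eq_coeffSum hβ]
  exact coeffSum_mono h

theorem omegaStack_pos (n l : ℕ) : 0 < omegaStack n (l + 1) := by
  cases n <;> exact oadd_pos _ _ _

end ONote

theorem fdl_le_imp_le (d l : ℕ) (α : Fin (d + 2) → ONote)
    (hNF : ∀ i, (α i).NF)
    (hlt : ∀ i, α i < omegaStack (d + 1) (l + 1))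
    (h : List.Forall₂ (· ≤ ·) (Fdl l d (fun i => α i.castSucc))
      (Fdl l d (fun i => α i.succ))) :
    α 0 ≤ α 1 := by
  induction d with
  | zero =>
    simp only [Fdl, Fin.castSucc_zero, Fin.succ_zero_eq_one, List.forall₂_map_left_iff,
      List.forall₂_map_right_iff, List.forall₂_same, List.mem_reverse, List.mem_range] at h
    have hbelow (i) : (α i).NFBelow (l + 1 : ℕ) :=
      (hNF i).below_of_lt' (by simpa [lt_def, omegaStack, ONote.repr] using hlt i)
    exact le_of_forall_coeff_le (hbelow 0) (hbelow 1) h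
  | succ d ih =>
    simp only [Fdl, List.forall₂_cons] at h
    obtain ⟨hCP, hCC, hF⟩ := h
    have hCE : CE (α 0) (α 1) ≤ CE (α 1) (α 2) :=
      ih (fun i => CE (α i.castSucc) (α i.succ)) (fun i => nf_CE (hNF _) _)
        (fun i => CE_lt_of_lt_oadd (hNF _) (omegaStack_pos _ _) (hlt _) _)
        (by simpa only [Fin.succ_castSucc] using hF)
    rw [le_def]
    by_contra! h10
    exact (CE_lt_CE_of_lt (hNF 0) (hNF 1) (lt_def.2 h10) hCP hCC).not_ge hCE
end

section
/- For every function f : ℕ → ℕ and every d, c, k, m ∈ ℕ, there exists R such that for every coloring C : [m, R]^{d} → {0,...,c} of d-element subsets there exists a C-homogeneous set H = {h₁ < h₂ < ...} of size at least f(h_k). -/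
theorem HomogS.mono {k d : ℕ} {C : Finset ℕ → Fin k} {S T : Set ℕ} (hS : HomogS k d C S)
    (hTS : T ⊆ S) : HomogS k d C T :=
  let ⟨c, hc⟩ := hS
  ⟨c, fun s hs => hc s (hs.trans hTS)⟩

section InfiniteRamsey

variable {k d : ℕ} {C : Finset ℕ → Fin k}

theorem exists_homogS_insert_of_infinite
    (ih : ∀ (C' : Finset ℕ → Fin k) (S : Set ℕ), S.Infinite →
      ∃ T ⊆ S, T.Infinite ∧ HomogS k d C' T)
    {S : Set ℕ} (hS : S.Infinite) :
    ∃ a ∈ S, ∃ T ⊆ S ∩ Set.Ioi a, T.Infinite ∧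
      HomogS k d (fun s => C (insert a s)) T := by
  obtain ⟨a, haS⟩ := hS.nonempty
  obtain ⟨T, hTS, hT, hhom⟩ := ih (fun s => C (insert a s)) _ (hS.sdiff (Set.finite_Iic a))
  exact ⟨a, haS, T, fun x hx => ⟨(hTS hx).1, Set.mem_Ioi.2 (not_le.1 (hTS hx).2)⟩, hT, hhom⟩

theorem exists_strictMono_homogS_insert
    (ih : ∀ (C' : Finset ℕ → Fin k) (S : Set ℕ), S.Infinite →
      ∃ T ⊆ S, T.Infinite ∧ HomogS k d C' T)
    {S : Set ℕ} (hS : S.Infinite) :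
    ∃ a : ℕ → ℕ, (∀ i, a i ∈ S) ∧ StrictMono a ∧
      ∀ i, HomogS k d (fun s => C (insert (a i) s)) (a '' Set.Ioi i) := by
  choose! pin hpin next hnext hinf hhom using
    fun (S : Set ℕ) (hS : S.Infinite) => exists_homogS_insert_of_infinite (C := C) ih hS
  set P : ℕ → Set ℕ := fun i => next^[i] S
  have hP : ∀ i, (P i).Infinite := fun i => by
    induction i with
    | zero => exact hS
    | succ i ih => simpa [P, Function.iterate_succ_apply'] using hinf _ ih
  have hPsucc : ∀ i, P (i + 1) = next (P i) := fun i => Function.iterate_succ_apply' _ _ _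
  have hPanti : Antitone P := antitone_nat_of_succ_le fun i => by
    rw [hPsucc]; exact fun x hx => (hnext _ (hP i) hx).1
  have hpinP : ∀ i, pin (P i) ∈ P i := fun i => hpin _ (hP i)
  have hlater : ∀ i, (fun j => pin (P j)) '' Set.Ioi i ⊆ P (i + 1) := by
    rintro i _ ⟨j, hij, rfl⟩
    exact hPanti (Nat.succ_le_of_lt hij) (hpinP j)
  refine ⟨fun i => pin (P i), fun i => hPanti (Nat.zero_le i) (hpinP i), ?_, fun i => ?_⟩
  · refine strictMono_nat_of_lt_succ fun i => ?_
    have h := hpinP (i + 1)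
    rw [hPsucc] at h ⊢
    exact (hnext _ (hP i) h).2
  · exact (hhom _ (hP i)).mono ((hlater i).trans (hPsucc i).le)

theorem homogS_image_of_homogS_insert {a : ℕ → ℕ} (ha : StrictMono a) {I : Set ℕ}
    {c : Fin k} (hc : ∀ i ∈ I, ∀ s : Finset ℕ, ↑s ⊆ a '' Set.Ioi i → s.card = d →
      C (insert (a i) s) = c) :
    HomogS k (d + 1) C (a '' I) := by
  refine ⟨c, fun s hs hcard => ?_⟩
  have hne : s.Nonempty := Finset.card_pos.mp (by omega)
  obtain ⟨i, hi, hmin⟩ := hs (s.min'_mem hne)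
  have hrest : ↑(s.erase (a i)) ⊆ a '' Set.Ioi i := by
    intro y hy
    rw [Finset.coe_erase] at hy
    obtain ⟨j, -, rfl⟩ := hs hy.1
    refine ⟨j, ha.lt_iff_lt.1 (lt_of_le_of_ne ?_ (Ne.symm hy.2)), rfl⟩
    exact hmin ▸ s.min'_le _ hy.1
  have hmem : a i ∈ s := hmin ▸ s.min'_mem hne
  have := hc i hi _ hrest (by rw [Finset.card_erase_of_mem hmem]; omega)
  rwa [Finset.insert_erase hmem] at this

theorem exists_infinite_homogS_subset (d : ℕ) (C : Finset ℕ → Fin k) {S : Set ℕ}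
    (hS : S.Infinite) : ∃ T ⊆ S, T.Infinite ∧ HomogS k d C T := by
  induction d generalizing C S with
  | zero => exact ⟨S, subset_rfl, hS, C ∅, fun s _ hs => by rw [Finset.card_eq_zero.mp hs]⟩
  | succ d ih =>
    obtain ⟨a, haS, ha, hhom⟩ :=
      exists_strictMono_homogS_insert (C := C) (fun C' _ => ih C') hS
    choose col hcol using hhom
    obtain ⟨c, hc⟩ := Finite.exists_infinite_fiber col
    refine ⟨a '' (col ⁻¹' {c}), Set.image_subset_iff.2 fun i _ => haS i,
      (Set.infinite_coe_iff.1 hc).image ha.injective.injOn, ?_⟩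
    exact homogS_image_of_homogS_insert ha fun i hi => hi ▸ hcol i

end InfiniteRamsey

theorem exists_frequently_eqOn_finset {α β : Type*} [Finite β] (F : ℕ → α → β) :
    ∃ G : α → β, ∀ (s : Finset α) (N : ℕ), ∃ R ≥ N, Set.EqOn (F R) G s := by
  have hlim : ∀ a, ∃ b, ∀ᶠ R in (Filter.hyperfilter ℕ : Filter ℕ), F R a = b := fun a =>
    Ultrafilter.eventually_exists_iff.1 (.of_forall fun R => ⟨F R a, rfl⟩)
  choose G hG using hlim
  refine ⟨G, fun s N => ?_⟩
  have hlarge : ∀ᶠ R in (Filter.hyperfilter ℕ : Filter ℕ), N ≤ R :=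
    Nat.hyperfilter_le_atTop (Filter.eventually_ge_atTop N)
  exact (hlarge.and ((Filter.eventually_all_finset s).2 fun a _ => hG a)).exists

theorem Set.Infinite.exists_finset_le_card_getD_sort {T : Set ℕ} (hT : T.Infinite) (k : ℕ)
    (g : ℕ → ℕ) : ∃ H : Finset ℕ, ↑H ⊆ T ∧ k ≤ H.card ∧
      g ((H.sort (· ≤ ·)).getD (k - 1) 0) ≤ H.card := by
  set e : ℕ → ℕ := Nat.nth (· ∈ T)
  have he : StrictMono e := Nat.nth_strictMono hT
  set N := k + 1 + g (e (k - 1))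
  let f : Fin N → ℕ := fun i => e i
  have hf : StrictMono f := he.comp Fin.val_strictMono
  have hcard : (Finset.univ.image f).card = N := by
    rw [Finset.card_image_of_injective _ hf.injective, Finset.card_univ, Fintype.card_fin]
  have hsort := Finset.orderEmbOfFin_unique hcard
    (fun i => Finset.mem_image_of_mem f (Finset.mem_univ i)) hf
  refine ⟨Finset.univ.image f, ?_, by omega, ?_⟩
  · rintro _ hx
    obtain ⟨i, -, rfl⟩ := Finset.mem_image.1 hx
    exact Nat.nth_mem_of_infinite hT i
  · have hk : k - 1 < N := by omega
    have hnth := congrFun hsort ⟨k - 1, hk⟩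
    rw [Finset.orderEmbOfFin_apply, Fin.getElem_fin] at hnth
    rw [List.getD_eq_getElem _ _ (by rwa [Finset.length_sort, hcard]), ← hnth, hcard]
    exact Nat.le_add_left _ _

theorem strong_adjacent_paris_harrington
    (f : ℕ → ℕ) (d c k m : ℕ) :
    ∃ R : ℕ, ∀ C : Finset ℕ → Fin (c + 1),
      ∃ H : Finset ℕ, ↑H ⊆ Finset.Icc m R ∧ HomogF (c + 1) d C H ∧
        k ≤ H.card ∧ f ((H.sort (· ≤ ·)).getD (k - 1) 0) ≤ H.card := by
  by_contra hcon
  push Not at hcon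
  choose bad hbad using hcon
  obtain ⟨C, hC⟩ := exists_frequently_eqOn_finset bad
  obtain ⟨T, hTm, hT, c₀, hc₀⟩ := exists_infinite_homogS_subset d C (Set.Ici_infinite m)
  obtain ⟨H, hHT, hk, hf⟩ := hT.exists_finset_le_card_getD_sort k f
  obtain ⟨R, hR, hagree⟩ := hC H.powerset (H.sup id)
  have hIcc : ↑H ⊆ Finset.Icc m R := fun x hx =>
    Finset.mem_Icc.2 ⟨hTm (hHT hx), (Finset.le_sup (f := id) hx).trans hR⟩
  have hhom : HomogF (c + 1) d (bad R) H := ⟨c₀, fun s hs hcard => by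
    rw [hagree (Finset.mem_powerset.2 hs)]
    exact hc₀ s ((Finset.coe_subset.2 hs).trans hHT) hcard⟩
  exact (hbad R H hIcc hhom hk).not_ge hf
end

section
/- For every d ≥ 1 and every function C : ℕ^{d} → ℕ^{r}, defining f(x) = max over y ∈ {0,...,x}^{d} of the maximum coordinate of C(y), the strong adjacent Paris–Harrington principle SAPH^{d+1}_f implies the existence of x₁ < ... < x_{d+1} with C(x₁,...,x_d) ≤ C(x₂,...,x_{d+1}) coordinatewise. -/
/-!
Colour each `(d+1)`-set `x₁ < ⋯ < x_{d+1}` by recording, for every coordinate `j`, whether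
`C(x₁,…,x_d)_j ≤ C(x₂,…,x_{d+1})_j` and the residue of `C(x₁,…,x_d)_j` modulo `d + 2`, and take a
homogeneous set `H = {h₀ < h₁ < ⋯}` as given by SAPH with `k = d + 3`. If every comparison is `≤`,
the first `d + 1` elements of `H` are the required tuple. Otherwise some coordinate `j` strictly
decreases along the consecutive windows `(h_i,…,h_{i+d-1})` while keeping its residue, hence drops
by at least `d + 2` at each of the `|H| - d - 1` steps. Its starting value is at most
`f(h_{d+2}) ≤ |H|`, which is too small for `|H| ≥ d + 3`.
-/

open Finset

theorem exists_homogeneous_of_forall_fin {n : ℕ} {Q : Finset ℕ → Prop}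
    (h : ∀ c : ℕ, ∀ D : Finset ℕ → Fin (c + 1), ∃ H, HomogF (c + 1) n D H ∧ Q H)
    {α : Type*} [Fintype α] [Nonempty α] (D : Finset ℕ → α) :
    ∃ H, (∃ a, ∀ s ⊆ H, #s = n → D s = a) ∧ Q H := by
  obtain ⟨c, hc⟩ : ∃ c, Fintype.card α = c + 1 :=
    Nat.exists_eq_succ_of_ne_zero Fintype.card_ne_zero
  let e := Fintype.equivFinOfCardEq hc
  obtain ⟨H, ⟨b, hb⟩, hQ⟩ := h c (e ∘ D)
  exact ⟨H, ⟨e.symm b, fun s hs hn => e.eq_symm_apply.2 (hb s hs hn)⟩, hQ⟩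

section OrderedColouring

variable {α : Type*} {n : ℕ}

noncomputable def orderedColouring (F : (Fin n → ℕ) → α) (s : Finset ℕ) : Option α :=
  if h : #s = n then some (F (s.orderEmbOfFin h)) else none

theorem orderedColouring_image (F : (Fin n → ℕ) → α) {x : Fin n → ℕ} (hx : StrictMono x) :
    orderedColouring F (univ.image x) = some (F x) := by
  have hcard : #(univ.image x) = n := by simp [card_image_of_injective _ hx.injective]
  rw [orderedColouring, dif_pos hcard,
    ← orderEmbOfFin_unique hcard (fun i => mem_image_of_mem _ (mem_univ i)) hx]

theorem apply_eq_of_orderedColouring_eq {F : (Fin n → ℕ) → α} {H : Finset ℕ} {a : Option α}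
    (hH : ∀ s ⊆ H, #s = n → orderedColouring F s = a) {x y : Fin n → ℕ}
    (hx : StrictMono x) (hy : StrictMono y) (hxH : ∀ t, x t ∈ H) (hyH : ∀ t, y t ∈ H) :
    F x = F y := by
  have key : ∀ z : Fin n → ℕ, StrictMono z → (∀ t, z t ∈ H) → some (F z) = a := by
    intro z hz hzH
    rw [← orderedColouring_image F hz]
    exact hH _ (image_subset_iff.2 fun t _ => hzH t)
      (by simp [card_image_of_injective _ hz.injective])
  exact Option.some_injective _ ((key x hx hxH).trans (key y hy hyH).symm)

end OrderedColouring

theorem Finset.strictMonoOn_getD_sort {β : Type*} [LinearOrder β] (s : Finset β) (b : β) :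
    StrictMonoOn (fun i => (s.sort (· ≤ ·)).getD i b) (Set.Iio #s) := by
  intro i hi j hj hij
  have hi' : i < (s.sort (· ≤ ·)).length := by simpa using hi
  have hj' : j < (s.sort (· ≤ ·)).length := by simpa using hj
  simp only [List.getD_eq_getElem _ _ hi', List.getD_eq_getElem _ _ hj']
  exact (sortedLT_sort s).getElem_lt_getElem_of_lt hij

theorem Finset.getD_sort_mem {β : Type*} [LinearOrder β] (s : Finset β) (b : β) {i : ℕ}
    (hi : i < #s) : (s.sort (· ≤ ·)).getD i b ∈ s := by
  have hi' : i < (s.sort (· ≤ ·)).length := by simpa using hi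
  rw [List.getD_eq_getElem _ _ hi', ← mem_sort (· ≤ ·)]
  exact List.getElem_mem hi'

theorem add_mul_le_of_lt_of_modEq {g : ℕ → ℕ} {p n : ℕ}
    (h : ∀ i < n, g (i + 1) < g i ∧ g (i + 1) ≡ g i [MOD p]) : g n + p * n ≤ g 0 := by
  induction n with
  | zero => simp
  | succ n ih =>
    have hstep := (h n n.lt_succ_self).2.add_le_of_lt (h n n.lt_succ_self).1
    have hprev := ih fun i hi => h i (hi.trans n.lt_succ_self)
    rw [Nat.mul_succ]
    omega

section Window

variable (a : ℕ → ℕ) (m i : ℕ)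

def window : Fin m → ℕ := fun t => a (i + t)

theorem init_window : Fin.init (window a (m + 1) i) = window a m i := rfl

theorem tail_window : Fin.tail (window a (m + 1) i) = window a m (i + 1) := by
  funext t
  simp [Fin.tail, window, Nat.add_right_comm, Nat.add_assoc]

variable {a m i} {N : ℕ}

theorem strictMono_window (ha : StrictMonoOn a (Set.Iio N)) (hi : i + m ≤ N) :
    StrictMono (window a m i) := fun s t hst =>
  ha (show i + s < N by omega) (show i + t < N by omega) (Nat.add_lt_add_left hst i)

end Window

variable {d r : ℕ}

def boxMax (C : (Fin d → ℕ) → (Fin r → ℕ)) (x : ℕ) : ℕ :=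
  (univ : Finset (Fin d → Fin (x + 1))).sup fun y => univ.sup fun j => C (fun i => (y i : ℕ)) j

theorem apply_le_boxMax (C : (Fin d → ℕ) → (Fin r → ℕ)) {x : ℕ} {y : Fin d → ℕ}
    (hy : ∀ i, y i ≤ x) (j : Fin r) : C y j ≤ boxMax C x := by
  let z : Fin d → Fin (x + 1) := fun i => ⟨y i, Nat.lt_succ_of_le (hy i)⟩
  exact (le_sup (f := fun j => C (fun i => (z i : ℕ)) j) (mem_univ j)).trans
    (le_sup (f := fun z : Fin d → Fin (x + 1) => univ.sup fun j => C (fun i => (z i : ℕ)) j)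
      (mem_univ z))

/-- The residue forces a strict descent that preserves the pattern to drop by at least `d + 2`. -/
def adjacentPattern (C : (Fin d → ℕ) → (Fin r → ℕ)) (x : Fin (d + 1) → ℕ) :
    Fin r → Bool × ZMod (d + 2) :=
  fun j => (decide (C (Fin.init x) j ≤ C (Fin.tail x) j), (C (Fin.init x) j : ZMod (d + 2)))

theorem mul_le_of_adjacentPattern_window_eq (C : (Fin d → ℕ) → (Fin r → ℕ)) (a : ℕ → ℕ)
    (j : Fin r) {n : ℕ}
    (hconst : ∀ i ≤ n, adjacentPattern C (window a (d + 1) i) j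
      = adjacentPattern C (window a (d + 1) 0) j)
    (hdesc : (adjacentPattern C (window a (d + 1) 0) j).1 = false) :
    (d + 2) * n ≤ C (window a d 0) j := by
  have hwin : ∀ i ≤ n, C (window a d (i + 1)) j < C (window a d i) j ∧
      C (window a d i) j ≡ C (window a d 0) j [MOD d + 2] := by
    intro i hi
    obtain ⟨hcmp, hres⟩ := Prod.ext_iff.1 (hconst i hi)
    replace hcmp := hcmp.trans hdesc
    simp only [adjacentPattern, init_window, tail_window, decide_eq_false_iff_not, not_le] at hcmp
    exact ⟨hcmp, (ZMod.natCast_eq_natCast_iff _ _ _).1 hres⟩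
  have := add_mul_le_of_lt_of_modEq (g := fun i => C (window a d i) j) (p := d + 2) (n := n)
    fun i hi => ⟨(hwin i hi.le).1, (hwin (i + 1) hi).2.trans (hwin i hi.le).2.symm⟩
  omega

theorem exists_adjacent_le_of_adjacentPattern_eq (C : (Fin d → ℕ) → (Fin r → ℕ))
    {H : Finset ℕ}
    (hconst : ∀ x y, StrictMono x → StrictMono y → (∀ t, x t ∈ H) → (∀ t, y t ∈ H) →
      adjacentPattern C x = adjacentPattern C y)
    (hcard : d + 3 ≤ #H) (hbound : boxMax C ((H.sort (· ≤ ·)).getD (d + 2) 0) ≤ #H) :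
    ∃ x : Fin (d + 1) → ℕ, StrictMono x ∧ C (Fin.init x) ≤ C (Fin.tail x) := by
  set a := fun i => (H.sort (· ≤ ·)).getD i 0
  have ha := H.strictMonoOn_getD_sort 0
  have hwin : ∀ i, i + (d + 1) ≤ #H →
      StrictMono (window a (d + 1) i) ∧ ∀ t, window a (d + 1) i t ∈ H :=
    fun i hi => ⟨strictMono_window ha hi, fun t => H.getD_sort_mem 0 (by omega)⟩
  by_cases hle : ∀ j, (adjacentPattern C (window a (d + 1) 0) j).1
  · exact ⟨_, (hwin 0 (by omega)).1, fun j => by simpa [adjacentPattern] using hle j⟩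
  push Not at hle
  obtain ⟨j, hj⟩ := hle
  have hdrop := mul_le_of_adjacentPattern_window_eq C a j (n := #H - (d + 1))
    (fun i hi => congrFun (hconst _ _ (hwin i (by omega)).1 (hwin 0 (by omega)).1
      (hwin i (by omega)).2 (hwin 0 (by omega)).2) j) (by simpa using hj)
  have hstart : C (window a d 0) j ≤ #H :=
    (apply_le_boxMax C (fun t => (ha.monotoneOn (Set.mem_Iio.2 (by omega))
      (Set.mem_Iio.2 (by omega)) (by omega) : a (0 + t) ≤ a (d + 2))) j).trans hbound
  obtain ⟨u, hu⟩ : ∃ u, #H = u + (d + 3) := ⟨#H - (d + 3), by omega⟩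
  rw [hu, show u + (d + 3) - (d + 1) = u + 2 by omega] at hdrop
  nlinarith

theorem saph_implies_adjacent_ramsey_general (d r : ℕ)
    (C : (Fin d → ℕ) → (Fin r → ℕ))
    (f : ℕ → ℕ)
    (hf : ∀ x : ℕ, f x = Finset.sup (Finset.univ : Finset (Fin d → Fin (x + 1)))
      (fun y => Finset.sup Finset.univ (fun j => C (fun i => (y i : ℕ)) j)))
    (hSAPH : ∀ c k m : ℕ,
      ∃ R : ℕ, ∀ D : Finset ℕ → Fin (c + 1),
        ∃ H : Finset ℕ, ↑H ⊆ Finset.Icc m R ∧ HomogF (c + 1) (d + 1) D H ∧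
          k ≤ H.card ∧ f ((H.sort (· ≤ ·)).getD (k - 1) 0) ≤ H.card) :
    ∃ x : Fin (d + 1) → ℕ, StrictMono x ∧
      C (fun i => x i.castSucc) ≤ C (fun i => x i.succ) := by
  obtain ⟨H, ⟨p, hp⟩, hcard, hbound⟩ := exists_homogeneous_of_forall_fin
    (Q := fun H => d + 3 ≤ #H ∧ f ((H.sort (· ≤ ·)).getD (d + 2) 0) ≤ #H)
    (fun c D => by
      obtain ⟨R, hR⟩ := hSAPH c (d + 3) 0
      obtain ⟨H, -, hD, hQ⟩ := hR D
      exact ⟨H, hD, hQ⟩)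
    (orderedColouring (adjacentPattern C))
  exact exists_adjacent_le_of_adjacentPattern_eq C
    (fun _ _ hx hy hxH hyH => apply_eq_of_orderedColouring_eq hp hx hy hxH hyH) hcard
    ((hf _).symm.trans_le hbound)

theorem saph_implies_adjacent_ramsey (d r : ℕ) (hd : 1 ≤ d)
    (C : (Fin d → ℕ) → (Fin r → ℕ))
    (f : ℕ → ℕ)
    (hf : ∀ x : ℕ, f x = Finset.sup (Finset.univ : Finset (Fin d → Fin (x + 1)))
      (fun y => Finset.sup Finset.univ (fun j => C (fun i => (y i : ℕ)) j)))
    (hSAPH : ∀ c k m : ℕ,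
      ∃ R : ℕ, ∀ D : Finset ℕ → Fin (c + 1),
        ∃ H : Finset ℕ, ↑H ⊆ Finset.Icc m R ∧ HomogF (c + 1) (d + 1) D H ∧
          k ≤ H.card ∧ f ((H.sort (· ≤ ·)).getD (k - 1) 0) ≤ H.card) :
    ∃ x : Fin (d + 1) → ℕ, StrictMono x ∧
      C (fun i => x i.castSucc) ≤ C (fun i => x i.succ) :=
  saph_implies_adjacent_ramsey_general d r C f hf hSAPH
end
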